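/- arXiv:2105.10177 — 7 statements merged into one kernel-verified Lean document; each statement's English description precedes it below -/
import Mathlib

section
/- For any g, h in the upper half-plane H, define γ(g,h) = |g-h|²/(Im g · Im h). Then |g - h|² ≤ |h|²(4γ(g,h)² + 2γ(g,h)). -/
/-
Write `a = Im g`, `b = Im h`, `γ = gam g h`. Since `|Im (g - h)| ≤ ‖g - h‖`,
`γ a b ≥ (a - b)² ≥ a² - 2ab`, hence `a ≤ (γ + 2) b`. Therefore
`‖g - h‖² = γ a b ≤ γ (γ + 2) b² ≤ (4γ² + 2γ) ‖h‖²`.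
-/

/-- Hyperbolic semi-metric functional on the upper half-plane. -/
noncomputable def gam (g h : ℂ) : ℝ := ‖g - h‖ ^ 2 / (g.im * h.im)

lemma Complex.sq_im_le_sq_norm (z : ℂ) : z.im ^ 2 ≤ ‖z‖ ^ 2 :=
  sq_le_sq.2 (by simpa only [abs_norm] using Complex.abs_im_le_norm z)

lemma gam_nonneg {g h : ℂ} (hg : 0 < g.im) (hh : 0 < h.im) : 0 ≤ gam g h := by
  unfold gam
  positivity

lemma gam_mul_im_mul_im {g h : ℂ} (hg : 0 < g.im) (hh : 0 < h.im) :
    gam g h * (g.im * h.im) = ‖g - h‖ ^ 2 :=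
  div_mul_cancel₀ _ (mul_pos hg hh).ne'

lemma im_le_gam_add_two_mul_im {g h : ℂ} (hg : 0 < g.im) (hh : 0 < h.im) :
    g.im ≤ (gam g h + 2) * h.im := by
  have hsq : (g.im - h.im) ^ 2 ≤ gam g h * (g.im * h.im) := by
    rw [gam_mul_im_mul_im hg hh, ← Complex.sub_im]
    exact Complex.sq_im_le_sq_norm _
  refine le_of_mul_le_mul_left ?_ hg
  nlinarith [sq_nonneg h.im]

theorem stmt0 (g h : ℂ) (hg : 0 < g.im) (hh : 0 < h.im) :
    ‖g - h‖ ^ 2 ≤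
      ‖h‖ ^ 2 * (4 * gam g h ^ 2 + 2 * gam g h) := by
  have hγ := gam_nonneg hg hh
  calc ‖g - h‖ ^ 2 = gam g h * g.im * h.im := by rw [mul_assoc, gam_mul_im_mul_im hg hh]
    _ ≤ gam g h * ((gam g h + 2) * h.im) * h.im := by
        gcongr
        exact im_le_gam_add_two_mul_im hg hh
    _ = h.im ^ 2 * (gam g h ^ 2 + 2 * gam g h) := by ring
    _ ≤ ‖h‖ ^ 2 * (4 * gam g h ^ 2 + 2 * gam g h) := by
        gcongr ?_ * (?_ + _)
        · exact Complex.sq_im_le_sq_norm h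
        · nlinarith [sq_nonneg (gam g h)]
end

section
/- For any g, h in the upper half-plane H, |g| ≤ 4γ(g,h)·Im h + 2|h|, where γ(g,h) = |g-h|²/(Im g · Im h). -/
theorem gam_mul_im_right {g h : ℂ} (hh : h.im ≠ 0) :
    gam g h * h.im = ‖g - h‖ ^ 2 / g.im := by
  rw [gam, div_mul_eq_mul_div, mul_div_mul_right _ _ hh]

theorem le_four_mul_sq_div_of_le_two_mul {x y d : ℝ} (hy : 0 < y) (hyx : y ≤ x)
    (hxd : x ≤ 2 * d) : x ≤ 4 * (d ^ 2 / y) := by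
  rw [← mul_div_assoc, le_div_iff₀ hy]
  nlinarith

theorem stmt2 (g h : ℂ) (hg : 0 < g.im) (hh : 0 < h.im) :
    ‖g‖ ≤ 4 * gam g h * h.im + 2 * ‖h‖ := by
  rw [mul_assoc, gam_mul_im_right hh.ne']
  have hsplit : ‖g‖ ≤ 2 * ‖g - h‖ ∨ ‖g‖ ≤ 2 * ‖h‖ := by
    have := norm_le_norm_sub_add g h
    by_contra! hcon
    linarith [hcon.1, hcon.2]
  rcases hsplit with hd | ht
  · linarith [le_four_mul_sq_div_of_le_two_mul hg (Complex.im_le_norm g) hd, norm_nonneg h]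
  · have : 0 ≤ ‖g - h‖ ^ 2 / g.im := by positivity
    linarith
end

section
/- Let z ∈ H and let Γ = Γ(z) ∈ H satisfy Γ = -(z+Γ)⁻¹. Then for any h ∈ H, γ(-(z+h)⁻¹, Γ) ≤ γ(h, Γ), where γ(g,h) = |g-h|²/(Im g · Im h). -/
/-
The map `h ↦ -(z + h)⁻¹` is the translation `h ↦ z + h` followed by the inversion `w ↦ -w⁻¹`.
The inversion preserves `gam`, and a translation upward can only decrease it, since the numerator
`‖g - h‖ ^ 2` is unchanged while both imaginary parts in the denominator grow. As `Γ` is the fixed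
point, `gam (-(z + h)⁻¹) Γ = gam (z + h) (z + Γ) ≤ gam h Γ`.
-/

theorem gam_neg_inv (g h : ℂ) : gam (-g⁻¹) (-h⁻¹) = gam g h := by
  rcases eq_or_ne g 0 with rfl | hg
  · simp [gam]
  rcases eq_or_ne h 0 with rfl | hh
  · simp [gam]
  have hdiff : -g⁻¹ - -h⁻¹ = (g - h) / (g * h) := by
    field_simp
    ring
  have him (w : ℂ) : (-w⁻¹).im = w.im / Complex.normSq w := by
    simp [Complex.inv_im, neg_div]
  have hg' := Complex.normSq_pos.mpr hg
  have hh' := Complex.normSq_pos.mpr hh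
  simp only [gam, hdiff, him, norm_div, norm_mul, div_pow, mul_pow, Complex.sq_norm]
  field_simp

theorem gam_add_le {g h z : ℂ} (hg : 0 < g.im) (hh : 0 < h.im) (hz : 0 ≤ z.im) :
    gam (z + g) (z + h) ≤ gam g h := by
  simp only [gam, add_sub_add_left_eq_sub, Complex.add_im]
  gcongr <;> linarith

theorem stmt3 (z Γ h : ℂ) (hz : 0 < z.im) (hΓ : 0 < Γ.im) (hh : 0 < h.im)
    (hfix : Γ = -(z + Γ)⁻¹) :
    gam (-(z + h)⁻¹) Γ ≤ gam h Γ :=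
  calc gam (-(z + h)⁻¹) Γ = gam (-(z + h)⁻¹) (-(z + Γ)⁻¹) := by rw [← hfix]
    _ = gam (z + h) (z + Γ) := gam_neg_inv _ _
    _ ≤ gam h Γ := gam_add_le hh hΓ hz.le
end

section
/- Fix Γ ∈ H and write γ(h) = |h-Γ|²/(Im h · Im Γ). For any n ≥ 1 and h₁,...,hₙ ∈ H, γ((1/n)∑ᵢ hᵢ) = (1/n) ∑_{i,j} cos(α_{ij}) √(qᵢ γ(hᵢ)) √(qⱼ γ(hⱼ)), where qᵢ = Im hᵢ / ∑ⱼ Im hⱼ and α_{ij} = arg((hᵢ - Γ)·conj(hⱼ - Γ)) (with the convention arg 0 = π/2). -/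
/-- The angle `arg ((a-Γ) * conj (b-Γ))`, with the convention `arg 0 = π/2`. -/
noncomputable def angleArg (Γ a b : ℂ) : ℝ :=
  if (a - Γ) * (starRingEnd ℂ) (b - Γ) = 0 then Real.pi / 2
  else Complex.arg ((a - Γ) * (starRingEnd ℂ) (b - Γ))

/-!
Put `A i = h i - Γ`, `S = ∑ Im h k` and `c = S · Im Γ`. Then `q i γ(h i) = ‖A i‖² / c`, and since
`‖z‖ cos (arg z) = Re z` each summand on the right is `Re (A i · conj (A j)) / c`. The double sum
of these is `‖∑ A i‖² / c`, while the mean `m` satisfies `m - Γ = (∑ A i) / n` and `Im m = S / n`.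
-/

open ComplexConjugate

lemma norm_mul_norm_mul_cos_angleArg (Γ a b : ℂ) :
    ‖a - Γ‖ * ‖b - Γ‖ * Real.cos (angleArg Γ a b) = ((a - Γ) * conj (b - Γ)).re := by
  have hnorm : ‖a - Γ‖ * ‖b - Γ‖ = ‖(a - Γ) * conj (b - Γ)‖ := by
    rw [norm_mul, Complex.norm_conj]
  unfold angleArg
  split_ifs with hz
  · rw [hz, Complex.zero_re, Real.cos_pi_div_two, mul_zero]
  · rw [hnorm, Complex.norm_mul_cos_arg]

lemma div_mul_gam {a : ℂ} (ha : a.im ≠ 0) (Γ : ℂ) (S : ℝ) :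
    a.im / S * gam a Γ = ‖a - Γ‖ ^ 2 / (S * Γ.im) := by
  unfold gam
  field_simp

lemma sqrt_div_mul_gam {a : ℂ} (ha : a.im ≠ 0) (Γ : ℂ) (S : ℝ) :
    Real.sqrt (a.im / S * gam a Γ) = ‖a - Γ‖ / Real.sqrt (S * Γ.im) := by
  rw [div_mul_gam ha, Real.sqrt_div (sq_nonneg _), Real.sqrt_sq (norm_nonneg _)]

lemma cos_angleArg_mul_sqrt_mul_sqrt {a b Γ : ℂ} {S : ℝ} (ha : a.im ≠ 0) (hb : b.im ≠ 0)
    (hc : 0 ≤ S * Γ.im) :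
    Real.cos (angleArg Γ a b) * Real.sqrt (a.im / S * gam a Γ) * Real.sqrt (b.im / S * gam b Γ) =
      ((a - Γ) * conj (b - Γ)).re / (S * Γ.im) := by
  rw [sqrt_div_mul_gam ha, sqrt_div_mul_gam hb, ← norm_mul_norm_mul_cos_angleArg]
  calc _ = ‖a - Γ‖ * ‖b - Γ‖ * Real.cos (angleArg Γ a b) /
        (Real.sqrt (S * Γ.im) * Real.sqrt (S * Γ.im)) := by ring
    _ = _ := by rw [Real.mul_self_sqrt hc]

lemma sum_sum_re_mul_conj {ι : Type*} [Fintype ι] (A : ι → ℂ) :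
    ∑ i, ∑ j, (A i * conj (A j)).re = ‖∑ i, A i‖ ^ 2 := by
  simp only [← Complex.re_sum, ← Finset.mul_sum, ← map_sum, ← Finset.sum_mul, Complex.mul_conj,
    Complex.normSq_eq_norm_sq]
  norm_cast

lemma gam_mean {ι : Type*} [Fintype ι] (h : ι → ℂ) (Γ : ℂ) :
    gam ((1 / (Fintype.card ι : ℂ)) * ∑ i, h i) Γ =
      ‖∑ i, (h i - Γ)‖ ^ 2 / (Fintype.card ι * ((∑ i, (h i).im) * Γ.im)) := by
  unfold gam
  rcases eq_or_ne (Fintype.card ι : ℂ) 0 with hN | hN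
  · have hN' : (Fintype.card ι : ℝ) = 0 := by exact_mod_cast hN
    simp [hN, hN']
  have hsub : 1 / (Fintype.card ι : ℂ) * ∑ i, h i - Γ = (∑ i, (h i - Γ)) / Fintype.card ι := by
    rw [Finset.sum_sub_distrib, Finset.sum_const, Finset.card_univ, nsmul_eq_mul]
    field_simp
  have him : (1 / (Fintype.card ι : ℂ) * ∑ i, h i).im = (∑ i, (h i).im) / Fintype.card ι := by
    rw [one_div_mul_eq_div, Complex.div_natCast_im, Complex.im_sum]
  rw [hsub, him, norm_div, Complex.norm_natCast]
  have hN' : (Fintype.card ι : ℝ) ≠ 0 := by exact_mod_cast hN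
  field_simp

theorem stmt4_general (n : ℕ) (Γ : ℂ) (hΓ : 0 < Γ.im)
    (h : Fin n → ℂ) (hh : ∀ i, 0 < (h i).im) :
    gam ((1 / (n : ℂ)) * ∑ i, h i) Γ =
      (1 / (n : ℝ)) * ∑ i, ∑ j,
        Real.cos (angleArg Γ (h i) (h j)) *
          Real.sqrt (((h i).im / ∑ k, (h k).im) * gam (h i) Γ) *
          Real.sqrt (((h j).im / ∑ k, (h k).im) * gam (h j) Γ) := by
  have hc : 0 ≤ (∑ k, (h k).im) * Γ.im :=
    mul_nonneg (Finset.sum_nonneg fun k _ => (hh k).le) hΓ.le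
  simp_rw [cos_angleArg_mul_sqrt_mul_sqrt (hh _).ne' (hh _).ne' hc, ← Finset.sum_div]
  have hmean := gam_mean h Γ
  rw [Fintype.card_fin] at hmean
  rw [sum_sum_re_mul_conj, hmean]
  ring

theorem stmt4 (n : ℕ) (hn : 1 ≤ n) (Γ : ℂ) (hΓ : 0 < Γ.im)
    (h : Fin n → ℂ) (hh : ∀ i, 0 < (h i).im) :
    gam ((1 / (n : ℂ)) * ∑ i, h i) Γ =
      (1 / (n : ℝ)) * ∑ i, ∑ j,
        Real.cos (angleArg Γ (h i) (h j)) *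
          Real.sqrt (((h i).im / ∑ k, (h k).im) * gam (h i) Γ) *
          Real.sqrt (((h j).im / ∑ k, (h k).im) * gam (h j) Γ) :=
  stmt4_general n Γ hΓ h hh
end

section
/- Fix Γ ∈ H and write γ(h) = |h-Γ|²/(Im h · Im Γ). Then γ is convex on H: for any n ≥ 1 and h₁,...,hₙ ∈ H, γ((1/n)∑ᵢ hᵢ) ≤ (1/n) ∑ᵢ γ(hᵢ). -/
theorem add_sq_div_add_le {a b p q : ℝ} (s t : ℝ) (ha : 0 ≤ a) (hb : 0 ≤ b) (hp : 0 < p)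
    (hq : 0 < q) : (a * s + b * t) ^ 2 / (a * p + b * q) ≤ a * (s ^ 2 / p) + b * (t ^ 2 / q) := by
  rcases (add_nonneg (mul_nonneg ha hp.le) (mul_nonneg hb hq.le)).eq_or_lt with h0 | hpos
  · rw [← h0, div_zero]; positivity
  rw [div_le_iff₀ hpos]
  -- Cauchy–Schwarz for two terms, in Lagrange-identity form
  have key : (a * (s ^ 2 / p) + b * (t ^ 2 / q)) * (a * p + b * q) - (a * s + b * t) ^ 2
      = a * b * (s * q - t * p) ^ 2 / (p * q) := by
    field_simp; ring
  have : 0 ≤ a * b * (s * q - t * p) ^ 2 / (p * q) := by positivity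
  linarith

theorem convexOn_norm_sq_div {E : Type*} [SeminormedAddCommGroup E] [NormedSpace ℝ E] :
    ConvexOn ℝ {x : E × ℝ | 0 < x.2} fun x => ‖x.1‖ ^ 2 / x.2 := by
  refine ⟨convex_halfSpace_gt (f := Prod.snd) ⟨fun _ _ => rfl, fun _ _ => rfl⟩ 0, ?_⟩
  rintro ⟨v, p⟩ (hp : 0 < p) ⟨w, q⟩ (hq : 0 < q) a b ha hb -
  simp only [Prod.smul_mk, Prod.mk_add_mk, smul_eq_mul]
  have hnorm : ‖a • v + b • w‖ ≤ a * ‖v‖ + b * ‖w‖ := by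
    simpa [norm_smul, abs_of_nonneg ha, abs_of_nonneg hb] using norm_add_le (a • v) (b • w)
  calc ‖a • v + b • w‖ ^ 2 / (a * p + b * q) ≤ (a * ‖v‖ + b * ‖w‖) ^ 2 / (a * p + b * q) := by
        gcongr
    _ ≤ a * (‖v‖ ^ 2 / p) + b * (‖w‖ ^ 2 / q) := add_sq_div_add_le _ _ ha hb hp hq

theorem convexOn_gam {Γ : ℂ} (hΓ : 0 < Γ.im) :
    ConvexOn ℝ {z : ℂ | 0 < z.im} (gam · Γ) := by
  let g : ℂ →ᵃ[ℝ] ℂ × ℝ :=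
    (LinearMap.id.prod Complex.imLm).toAffineMap - AffineMap.const ℝ ℂ (Γ, 0)
  have hs : g ⁻¹' {x | 0 < x.2} = {z | 0 < z.im} := by ext; simp [g]
  have hconv := (convexOn_norm_sq_div.comp_affineMap g).smul (inv_nonneg.2 hΓ.le)
  rw [hs] at hconv
  refine hconv.congr fun z _ => ?_
  simp only [g, gam, AffineMap.coe_sub, LinearMap.coe_toAffineMap, AffineMap.coe_const,
    Function.comp_apply, Pi.sub_apply, LinearMap.prod_apply, LinearMap.id_coe, Complex.imLm_coe,
    Function.prod_apply, id_eq, Function.const_apply, Prod.mk_sub_mk, sub_zero, smul_eq_mul]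
  ring

theorem stmt5 (n : ℕ) (hn : 1 ≤ n) (Γ : ℂ) (hΓ : 0 < Γ.im)
    (h : Fin n → ℂ) (hh : ∀ i, 0 < (h i).im) :
    gam ((1 / (n : ℂ)) * ∑ i, h i) Γ ≤ (1 / (n : ℝ)) * ∑ i, gam (h i) Γ := by
  have hn' : (n : ℝ) ≠ 0 := by positivity
  have jensen := (convexOn_gam hΓ).map_sum_le (t := Finset.univ) (w := fun _ => 1 / (n : ℝ))
    (p := h) (fun _ _ => by positivity) (by simp [hn']) (fun i _ => hh i)
  simpa [← Finset.mul_sum, Complex.real_smul] using jensen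
end

section
/- Let N be an ℕ-valued random variable with mean d > 1 and let π_e be the extinction probability of a Galton-Watson branching process with offspring distribution the law of N, i.e. π_e is the smallest fixed point in [0,1] of the generating function φ(x) = E[x^N]. Then π_e ≤ 2·P(N ≤ 1). -/
/-!
Write `p = P(N ≤ 1)` and `φ x = E[x^N]`. Splitting the expectation along `{N ≤ 1}` and using
`x^N ≤ x^2` on `{N ≥ 2}` gives `φ x ≤ p + (1 - p) x²` on `[0,1]`, so `φ (2p) ≤ 2p` because
`4p(1-p) ≤ 1`. As `φ` is monotone and `φ 0 ≥ 0`, a Knaster–Tarski argument on `[0, 2p]` then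
produces a fixed point of `φ` in `[0, 2p]` whenever `2p < 1`; otherwise the fixed point `1` already
lies below `2p`.
-/

open MeasureTheory Set

theorem exists_fixedPt_mem_Icc_of_monotoneOn {α : Type*} [ConditionallyCompleteLattice α]
    {f : α → α} {a b : α} (hab : a ≤ b) (hf : MonotoneOn f (Icc a b))
    (ha : a ≤ f a) (hb : f b ≤ b) : ∃ c ∈ Icc a b, f c = c := by
  set S := {x ∈ Icc a b | x ≤ f x}
  have haS : a ∈ S := ⟨⟨le_rfl, hab⟩, ha⟩
  have hS : BddAbove S := ⟨b, fun x hx => hx.1.2⟩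
  have hc : sSup S ∈ Icc a b := ⟨le_csSup hS haS, csSup_le ⟨a, haS⟩ fun x hx => hx.1.2⟩
  have hf_mem : ∀ {x}, x ∈ Icc a b → f x ∈ Icc a b := fun hx =>
    ⟨ha.trans (hf ⟨le_rfl, hab⟩ hx hx.1), (hf hx ⟨hab, le_rfl⟩ hx.2).trans hb⟩
  have hle : sSup S ≤ f (sSup S) :=
    csSup_le ⟨a, haS⟩ fun x hx => hx.2.trans (hf hx.1 hc (le_csSup hS hx))
  have hfS : f (sSup S) ∈ S := ⟨hf_mem hc, hf hc (hf_mem hc) hle⟩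
  exact ⟨sSup S, hc, le_antisymm (le_csSup hS hfS) hle⟩

section GeneratingFunction

variable {Ω : Type*} [MeasurableSpace Ω] {P : Measure Ω} {N : Ω → ℕ}

theorem integrable_pow_of_mem_Icc [IsFiniteMeasure P] (hN : Measurable N) {x : ℝ}
    (hx : x ∈ Icc (0 : ℝ) 1) : Integrable (fun ω => x ^ N ω) P := by
  refine (integrable_const (1 : ℝ)).mono'
    ((measurable_from_nat (f := (x ^ ·))).comp hN).aestronglyMeasurable ?_
  filter_upwards with ω
  rw [Real.norm_eq_abs, abs_of_nonneg (pow_nonneg hx.1 _)]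
  exact pow_le_one₀ hx.1 hx.2

theorem monotoneOn_integral_pow [IsFiniteMeasure P] (hN : Measurable N) :
    MonotoneOn (fun x : ℝ => ∫ ω, x ^ N ω ∂P) (Icc 0 1) := fun _ hx _ hy hxy =>
  integral_mono (integrable_pow_of_mem_Icc hN hx) (integrable_pow_of_mem_Icc hN hy)
    fun _ => pow_le_pow_left₀ hx.1 hxy _

theorem integral_pow_le_add_mul_sq [IsProbabilityMeasure P] (hN : Measurable N) {x : ℝ}
    (hx : x ∈ Icc (0 : ℝ) 1) :
    ∫ ω, x ^ N ω ∂P ≤ P.real {ω | N ω ≤ 1} + (1 - P.real {ω | N ω ≤ 1}) * x ^ 2 := by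
  set A := {ω | N ω ≤ 1}
  have hA : MeasurableSet A := hN measurableSet_Iic
  have hint := integrable_pow_of_mem_Icc (P := P) hN hx
  have h_on_A : ∫ ω in A, x ^ N ω ∂P ≤ ∫ _ in A, 1 ∂P :=
    setIntegral_mono_on hint.integrableOn (integrableOn_const (measure_ne_top P _)) hA
      fun _ _ => pow_le_one₀ hx.1 hx.2
  have h_off_A : ∫ ω in Aᶜ, x ^ N ω ∂P ≤ ∫ _ in Aᶜ, x ^ 2 ∂P :=
    setIntegral_mono_on hint.integrableOn (integrableOn_const (measure_ne_top P _)) hA.compl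
      fun ω hω => pow_le_pow_of_le_one hx.1 hx.2 <| by
        simp only [A, mem_compl_iff, mem_ofPred_eq] at hω; omega
  rw [setIntegral_const, smul_eq_mul, mul_one] at h_on_A
  rw [setIntegral_const, smul_eq_mul, probReal_compl_eq_one_sub hA] at h_off_A
  rw [← integral_add_compl hA hint]
  linarith

end GeneratingFunction

theorem stmt6_general {Ω : Type*} [MeasurableSpace Ω] (P : Measure Ω) [IsProbabilityMeasure P]
    (N : Ω → ℕ) (hN : Measurable N) :
    sInf {x : ℝ | x ∈ Set.Icc (0 : ℝ) 1 ∧ (∫ ω, x ^ N ω ∂P) = x}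
      ≤ 2 * (P {ω | N ω ≤ 1}).toReal := by
  set p := P.real {ω | N ω ≤ 1}
  have hbdd : BddBelow {x : ℝ | x ∈ Icc (0 : ℝ) 1 ∧ (∫ ω, x ^ N ω ∂P) = x} :=
    ⟨0, fun _ hx => hx.1.1⟩
  rcases le_or_gt 1 (2 * p) with h2p | h2p
  · exact (csInf_le hbdd ⟨⟨zero_le_one, le_rfl⟩, by simp⟩).trans h2p
  have hp : 0 ≤ p := measureReal_nonneg (μ := P)
  have hmono := (monotoneOn_integral_pow (P := P) hN).mono (Icc_subset_Icc_right h2p.le)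
  have h0 : (0 : ℝ) ≤ ∫ ω, (0 : ℝ) ^ N ω ∂P := integral_nonneg fun _ => pow_nonneg le_rfl _
  have h2p_sub : ∫ ω, (2 * p) ^ N ω ∂P ≤ 2 * p := by
    have := integral_pow_le_add_mul_sq (P := P) hN ⟨by positivity, h2p.le⟩
    nlinarith [sq_nonneg (2 * p - 1)]
  obtain ⟨c, hc, hfix⟩ :=
    exists_fixedPt_mem_Icc_of_monotoneOn (by positivity) hmono h0 h2p_sub
  exact (csInf_le hbdd ⟨⟨hc.1, hc.2.trans h2p.le⟩, hfix⟩).trans hc.2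

theorem stmt6 {Ω : Type*} [MeasurableSpace Ω] (P : Measure Ω) [IsProbabilityMeasure P]
    (N : Ω → ℕ) (hN : Measurable N)
    (hInt : Integrable (fun ω => (N ω : ℝ)) P)
    (hd : 1 < ∫ ω, (N ω : ℝ) ∂P) :
    sInf {x : ℝ | x ∈ Set.Icc (0 : ℝ) 1 ∧ (∫ ω, x ^ N ω ∂P) = x}
      ≤ 2 * (P {ω | N ω ≤ 1}).toReal :=
  stmt6_general P N hN
end

section
/- Let N be an ℕ-valued offspring random variable, n ≥ 2 an integer, and q = P(N < n). Assume q ≤ 2^{-n/(n-1)}. Let π_e be the extinction probability and let Z be the total progeny of the Galton-Watson tree with offspring law N, conditioned on extinction. Then for every integer k ≥ 1, P(Z ≥ k) ≤ (q^{1/n}/π_e)·(2 q^{1 - 1/n})^k. -/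
open MeasureTheory ProbabilityTheory
open scoped ENNReal

/-- Generation sizes of a Galton-Watson branching process driven by the
offspring variables `X n i`, started from a single individual. -/
def gwGen {Ω : Type*} (X : ℕ → ℕ → Ω → ℕ) : ℕ → Ω → ℕ
  | 0, _ => 1
  | n + 1, ω => ∑ i ∈ Finset.range (gwGen X n ω), X n i ω

/-- Total progeny of the Galton-Watson process. -/
noncomputable def gwProgeny {Ω : Type*} (X : ℕ → ℕ → Ω → ℕ) (ω : Ω) : ℝ≥0∞ :=
  ∑' m, (gwGen X m ω : ℝ≥0∞)

/-!
Let `G m` be the size of generation `m`, `Z m = G 0 + ⋯ + G (m - 1)` and `r = b⁻¹`. If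
`r φ(s) ≤ c` for all `s ≤ c`, then conditioning on the first `m` generations gives
`E[r ^ Z (m + 1) s ^ G (m + 1)] = E[r ^ Z m (r φ(s)) ^ G m]`, so by induction on `m`,
`E[r ^ Z m s ^ G m] ≤ c` for every `s ≤ c`. Taking `s = 0`, Markov's inequality bounds the
probability that the tree is extinct by generation `m` with at least `k` vertices by `c b ^ k`.
With `c = q ^ (1 / n)` and `b = 2 q ^ (1 - 1 / n)` the hypothesis holds because
`φ(s) ≤ q + s ^ n ≤ q + c ^ n = b c`, and `b ≤ 1` is exactly the assumption on `q`.
-/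

namespace GaltonWatson

open Finset

variable {Ω : Type*}

theorem measurable_apply_index {mΩ : MeasurableSpace Ω} {ι β : Type*} [Countable ι]
    [MeasurableSpace ι] [MeasurableSingletonClass ι] [MeasurableSpace β]
    {f : Ω → ι} (hf : Measurable f) {g : ι → Ω → β} (hg : ∀ i, Measurable (g i)) :
    Measurable fun ω => g (f ω) ω :=
  (measurable_from_prod_countable_left (f := Function.uncurry (Function.swap g)) hg).comp
    (measurable_id.prodMk hf)

/-- The number of individuals in generations `0, …, m - 1`. -/
def progenyBefore (X : ℕ → ℕ → Ω → ℕ) (m : ℕ) (ω : Ω) : ℕ :=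
  ∑ j ∈ range m, gwGen X j ω

theorem progenyBefore_succ (X : ℕ → ℕ → Ω → ℕ) (m : ℕ) (ω : Ω) :
    progenyBefore X (m + 1) ω = progenyBefore X m ω + gwGen X m ω :=
  sum_range_succ _ _

theorem gwGen_eq_zero_of_le (X : ℕ → ℕ → Ω → ℕ) {ω : Ω} {m j : ℕ} (hm : gwGen X m ω = 0)
    (hj : m ≤ j) : gwGen X j ω = 0 := by
  induction j, hj using Nat.le_induction with
  | base => exact hm
  | succ j _ ih => simp [gwGen, ih]

theorem gwProgeny_eq_progenyBefore (X : ℕ → ℕ → Ω → ℕ) {ω : Ω} {m : ℕ}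
    (hm : gwGen X m ω = 0) : gwProgeny X ω = progenyBefore X m ω := by
  rw [gwProgeny, tsum_eq_sum fun j hj => ?_, progenyBefore, Nat.cast_sum]
  rw [gwGen_eq_zero_of_le X hm (not_lt.1 (mem_range.not.1 hj)), Nat.cast_zero]

theorem exists_gwGen_eq_zero (X : ℕ → ℕ → Ω → ℕ) {ω : Ω} (h : gwProgeny X ω < ⊤) :
    ∃ m, gwGen X m ω = 0 := by
  by_contra! hpos
  have hsum : ∑' _ : ℕ, (1 : ℝ≥0∞) ≤ gwProgeny X ω :=
    ENNReal.tsum_le_tsum fun m => by exact_mod_cast Nat.one_le_iff_ne_zero.2 (hpos m)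
  rw [ENNReal.tsum_const_eq_top_of_ne_zero one_ne_zero] at hsum
  exact h.not_ge hsum

theorem progeny_ge_inter_lt_top_subset (X : ℕ → ℕ → Ω → ℕ) (k : ℕ) :
    {ω | (k : ℝ≥0∞) ≤ gwProgeny X ω} ∩ {ω | gwProgeny X ω < ⊤}
      ⊆ ⋃ m, {ω | gwGen X m ω = 0} ∩ {ω | k ≤ progenyBefore X m ω} := by
  rintro ω ⟨hk, hfin⟩
  obtain ⟨m, hm⟩ := exists_gwGen_eq_zero X hfin
  have hk' : (k : ℝ≥0∞) ≤ progenyBefore X m ω := gwProgeny_eq_progenyBefore X hm ▸ hk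
  exact Set.mem_iUnion.2 ⟨m, hm, by exact_mod_cast hk'⟩

theorem monotone_extinct_inter_progenyBefore_ge (X : ℕ → ℕ → Ω → ℕ) (k : ℕ) :
    Monotone fun m => {ω | gwGen X m ω = 0} ∩ {ω | k ≤ progenyBefore X m ω} :=
  fun _ _ hmm' _ ⟨h0, hk⟩ => ⟨gwGen_eq_zero_of_le X h0 hmm',
    hk.trans (sum_le_sum_of_subset (range_subset_range.2 hmm') :
      progenyBefore X _ _ ≤ progenyBefore X _ _)⟩

abbrev offspringSigma (X : ℕ → ℕ → Ω → ℕ) (S : Set (ℕ × ℕ)) : MeasurableSpace Ω :=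
  ⨆ p ∈ S, MeasurableSpace.comap (X p.1 p.2) inferInstance

theorem measurable_offspringSigma (X : ℕ → ℕ → Ω → ℕ) {S : Set (ℕ × ℕ)} {p : ℕ × ℕ}
    (hp : p ∈ S) : Measurable[offspringSigma X S] (X p.1 p.2) :=
  measurable_iff_comap_le.2 <|
    le_biSup (fun p : ℕ × ℕ => MeasurableSpace.comap (X p.1 p.2) inferInstance) hp

theorem offspringSigma_mono (X : ℕ → ℕ → Ω → ℕ) {S T : Set (ℕ × ℕ)} (h : S ⊆ T) :
    offspringSigma X S ≤ offspringSigma X T :=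
  biSup_mono h

theorem offspringSigma_le {mΩ : MeasurableSpace Ω} {X : ℕ → ℕ → Ω → ℕ}
    (hmeas : ∀ m i, Measurable (X m i)) (S : Set (ℕ × ℕ)) : offspringSigma X S ≤ mΩ :=
  iSup₂_le fun p _ => (hmeas p.1 p.2).comap_le

theorem measurable_sum_offspring (X : ℕ → ℕ → Ω → ℕ) {S : Set (ℕ × ℕ)} (m g : ℕ)
    (hS : ∀ i < g, (m, i) ∈ S) :
    Measurable[offspringSigma X S] fun ω => ∑ i ∈ range g, X m i ω :=
  Finset.measurable_sum _ fun i hi => measurable_offspringSigma X (hS i (mem_range.1 hi))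

theorem measurable_gwGen_offspringSigma (X : ℕ → ℕ → Ω → ℕ) :
    ∀ m, Measurable[offspringSigma X {p | p.1 < m}] (gwGen X m)
  | 0 => measurable_const
  | m + 1 => measurable_apply_index
      ((measurable_gwGen_offspringSigma X m).mono
        (offspringSigma_mono X fun _ hp => Nat.lt_succ_of_lt hp) le_rfl)
      fun g => measurable_sum_offspring X m g fun _ _ => Nat.lt_succ_self m

theorem measurable_progenyBefore_succ_offspringSigma (X : ℕ → ℕ → Ω → ℕ) (m : ℕ) :
    Measurable[offspringSigma X {p | p.1 < m}] (progenyBefore X (m + 1)) :=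
  Finset.measurable_sum _ fun j hj => (measurable_gwGen_offspringSigma X j).mono
    (offspringSigma_mono X fun _ hp => hp.trans_le (Nat.lt_succ_iff.1 (mem_range.1 hj)))
    le_rfl

theorem lintegral_eq_tsum_indicator {mΩ : MeasurableSpace Ω} (P : Measure Ω) {G : Ω → ℕ}
    (hG : Measurable G) {f : Ω → ℝ≥0∞} (hf : Measurable f) {F : ℕ → Ω → ℝ≥0∞}
    (hF : ∀ g, Measurable (F g)) :
    ∫⁻ ω, f ω * F (G ω) ω ∂P = ∑' g, ∫⁻ ω, {ω | G ω = g}.indicator f ω * F g ω ∂P := by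
  rw [← lintegral_tsum (f := fun g ω => {ω | G ω = g}.indicator f ω * F g ω)
    fun g => ((hf.indicator (hG (measurableSet_singleton g))).mul (hF g)).aemeasurable]
  refine lintegral_congr fun ω => ?_
  rw [tsum_eq_single (G ω) fun g hg => ?_]
  · simp
  · simp [Set.indicator_of_notMem (show ω ∉ {ω | G ω = g} from Ne.symm hg)]

noncomputable def offspringPGF {mΩ : MeasurableSpace Ω} (P : Measure Ω) (X : ℕ → ℕ → Ω → ℕ)
    (s : ℝ≥0∞) : ℝ≥0∞ :=
  ∫⁻ ω, s ^ X 0 0 ω ∂P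

section Probability

variable {mΩ : MeasurableSpace Ω} (P : Measure Ω) {X : ℕ → ℕ → Ω → ℕ}

theorem measurable_gwGen (hmeas : ∀ m i, Measurable (X m i)) (m : ℕ) :
    Measurable (gwGen X m) :=
  (measurable_gwGen_offspringSigma X m).mono (offspringSigma_le hmeas _) le_rfl

theorem measurable_progenyBefore (hmeas : ∀ m i, Measurable (X m i)) (m : ℕ) :
    Measurable (progenyBefore X m) :=
  Finset.measurable_sum _ fun j _ => measurable_gwGen hmeas j

theorem lintegral_pow_offspring (hmeas : ∀ m i, Measurable (X m i))
    (hident : ∀ m i, Measure.map (X m i) P = Measure.map (X 0 0) P) (s : ℝ≥0∞) (m i : ℕ) :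
    ∫⁻ ω, s ^ X m i ω ∂P = offspringPGF P X s := by
  rw [offspringPGF, ← lintegral_map measurable_from_top (hmeas m i), hident,
    lintegral_map measurable_from_top (hmeas 0 0)]

theorem lintegral_pow_sum_offspring (hmeas : ∀ m i, Measurable (X m i))
    (hindep : iIndepFun (fun p : ℕ × ℕ => X p.1 p.2) P)
    (hident : ∀ m i, Measure.map (X m i) P = Measure.map (X 0 0) P) (s : ℝ≥0∞) (m g : ℕ) :
    ∫⁻ ω, s ^ (∑ i ∈ range g, X m i ω) ∂P = offspringPGF P X s ^ g := by
  have hrow : iIndepFun (fun i ω => s ^ X m i ω) P :=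
    (hindep.precomp (g := fun i => (m, i)) fun _ _ h => (Prod.mk.inj h).2).comp
      (fun _ x => s ^ x) fun _ => measurable_from_top
  simp_rw [← prod_pow_eq_pow_sum]
  rw [lintegral_prod_eq_prod_lintegral_of_indepFun _ _ hrow
    fun i => measurable_from_top.comp (hmeas m i)]
  simp [lintegral_pow_offspring P hmeas hident]

theorem lintegral_mul_of_offspringSigma (hmeas : ∀ m i, Measurable (X m i))
    (hindep : iIndepFun (fun p : ℕ × ℕ => X p.1 p.2) P) {S : Set (ℕ × ℕ)} {f g : Ω → ℝ≥0∞}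
    (hf : Measurable[offspringSigma X S] f) (hg : Measurable[offspringSigma X Sᶜ] g) :
    ∫⁻ ω, f ω * g ω ∂P = (∫⁻ ω, f ω ∂P) * ∫⁻ ω, g ω ∂P :=
  lintegral_mul_eq_lintegral_mul_lintegral_of_independent_measurableSpace
    (offspringSigma_le hmeas S) (offspringSigma_le hmeas Sᶜ)
    (indep_biSup_compl (s := fun p : ℕ × ℕ => MeasurableSpace.comap (X p.1 p.2) inferInstance)
      (fun p => (hmeas p.1 p.2).comap_le) hindep.iIndep S) hf hg

theorem lintegral_mul_pow_gwGen_succ (hmeas : ∀ m i, Measurable (X m i))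
    (hindep : iIndepFun (fun p : ℕ × ℕ => X p.1 p.2) P)
    (hident : ∀ m i, Measure.map (X m i) P = Measure.map (X 0 0) P) {m : ℕ} {f : Ω → ℝ≥0∞}
    (hf : Measurable[offspringSigma X {p | p.1 < m}] f) (s : ℝ≥0∞) :
    ∫⁻ ω, f ω * s ^ gwGen X (m + 1) ω ∂P
      = ∫⁻ ω, f ω * offspringPGF P X s ^ gwGen X m ω ∂P := by
  have hG := measurable_gwGen hmeas m
  have hf' := hf.mono (offspringSigma_le hmeas _) le_rfl
  have hrow (g : ℕ) : Measurable[offspringSigma X {p | p.1 < m}ᶜ]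
      fun ω => s ^ ∑ i ∈ range g, X m i ω :=
    measurable_from_top.comp (measurable_sum_offspring X m g fun _ _ => lt_irrefl m)
  -- On `{gwGen X m = g}`, generation `m + 1` is a sum of `g` offspring variables of row `m`,
  -- which are independent of the first `m` generations.
  calc ∫⁻ ω, f ω * s ^ gwGen X (m + 1) ω ∂P
      = ∑' g, ∫⁻ ω, {ω | gwGen X m ω = g}.indicator f ω * s ^ ∑ i ∈ range g, X m i ω ∂P :=
        lintegral_eq_tsum_indicator P hG hf' fun g =>
          (hrow g).mono (offspringSigma_le hmeas _) le_rfl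
    _ = ∑' g, ∫⁻ ω, {ω | gwGen X m ω = g}.indicator f ω * offspringPGF P X s ^ g ∂P := by
        refine tsum_congr fun g => ?_
        have hfg : Measurable[offspringSigma X {p | p.1 < m}]
            ({ω | gwGen X m ω = g}.indicator f) :=
          hf.indicator (measurable_gwGen_offspringSigma X m (measurableSet_singleton g))
        rw [lintegral_mul_of_offspringSigma P hmeas hindep hfg (hrow g),
          lintegral_pow_sum_offspring P hmeas hindep hident,
          lintegral_mul_const _ (hfg.mono (offspringSigma_le hmeas _) le_rfl)]
    _ = ∫⁻ ω, f ω * offspringPGF P X s ^ gwGen X m ω ∂P :=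
        (lintegral_eq_tsum_indicator P hG hf' fun _ => measurable_const).symm

variable [IsProbabilityMeasure P]

theorem lintegral_pow_progenyBefore_mul_pow_gwGen_le (hmeas : ∀ m i, Measurable (X m i))
    (hindep : iIndepFun (fun p : ℕ × ℕ => X p.1 p.2) P)
    (hident : ∀ m i, Measure.map (X m i) P = Measure.map (X 0 0) P) {r c : ℝ≥0∞}
    (hrc : ∀ s ≤ c, r * offspringPGF P X s ≤ c) (m : ℕ) :
    ∀ s ≤ c, ∫⁻ ω, r ^ progenyBefore X m ω * s ^ gwGen X m ω ∂P ≤ c := by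
  induction m with
  | zero => intro s hs; simpa [progenyBefore, gwGen] using hs
  | succ m ih =>
    intro s hs
    calc ∫⁻ ω, r ^ progenyBefore X (m + 1) ω * s ^ gwGen X (m + 1) ω ∂P
        = ∫⁻ ω, r ^ progenyBefore X (m + 1) ω * offspringPGF P X s ^ gwGen X m ω ∂P :=
          lintegral_mul_pow_gwGen_succ P hmeas hindep hident
            (measurable_from_top.comp (measurable_progenyBefore_succ_offspringSigma X m)) s
      _ = ∫⁻ ω, r ^ progenyBefore X m ω * (r * offspringPGF P X s) ^ gwGen X m ω ∂P := by
          simp_rw [progenyBefore_succ, pow_add, mul_pow, mul_assoc]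
      _ ≤ c := ih _ (hrc s hs)

theorem measure_extinct_inter_progenyBefore_ge_mul_pow_le (hmeas : ∀ m i, Measurable (X m i))
    (hindep : iIndepFun (fun p : ℕ × ℕ => X p.1 p.2) P)
    (hident : ∀ m i, Measure.map (X m i) P = Measure.map (X 0 0) P) {r c : ℝ≥0∞} (hr : 1 ≤ r)
    (hrc : ∀ s ≤ c, r * offspringPGF P X s ≤ c) (k m : ℕ) :
    P ({ω | gwGen X m ω = 0} ∩ {ω | k ≤ progenyBefore X m ω}) * r ^ k ≤ c := by
  set E := {ω | gwGen X m ω = 0} ∩ {ω | k ≤ progenyBefore X m ω}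
  have hE : MeasurableSet E := (measurable_gwGen hmeas m (measurableSet_singleton 0)).inter
    (measurableSet_le measurable_const (measurable_progenyBefore hmeas m))
  have hle : E.indicator (fun _ => r ^ k)
      ≤ fun ω => r ^ progenyBefore X m ω * 0 ^ gwGen X m ω := by
    intro ω
    by_cases hω : ω ∈ E
    · have h0 : gwGen X m ω = 0 := hω.1
      simpa [Set.indicator_of_mem hω, h0] using pow_le_pow_right₀ hr hω.2
    · simp [Set.indicator_of_notMem hω]
  calc P E * r ^ k = ∫⁻ ω, E.indicator (fun _ => r ^ k) ω ∂P := by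
        rw [lintegral_indicator_const hE, mul_comm]
    _ ≤ c := (lintegral_mono hle).trans
        (lintegral_pow_progenyBefore_mul_pow_gwGen_le P hmeas hindep hident hrc m 0 bot_le)

theorem measure_progeny_ge_inter_lt_top_le (hmeas : ∀ m i, Measurable (X m i))
    (hindep : iIndepFun (fun p : ℕ × ℕ => X p.1 p.2) P)
    (hident : ∀ m i, Measure.map (X m i) P = Measure.map (X 0 0) P) {b c : ℝ≥0∞} (hb : b ≤ 1)
    (hc : c ≠ ⊤) (hbc : ∀ s ≤ c, offspringPGF P X s ≤ b * c) (k : ℕ) :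
    P ({ω | (k : ℝ≥0∞) ≤ gwProgeny X ω} ∩ {ω | gwProgeny X ω < ⊤}) ≤ c * b ^ k := by
  have hrc (s : ℝ≥0∞) (hs : s ≤ c) : b⁻¹ * offspringPGF P X s ≤ c :=
    calc b⁻¹ * offspringPGF P X s ≤ b⁻¹ * b * c := by rw [mul_assoc]; gcongr; exact hbc s hs
      _ ≤ c := mul_le_of_le_one_left' (ENNReal.inv_mul_le_one b)
  have hrk : b⁻¹ ^ k ≠ 0 :=
    pow_ne_zero _ (ENNReal.inv_ne_zero.2 (ne_top_of_le_ne_top ENNReal.one_ne_top hb))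
  refine (measure_mono (progeny_ge_inter_lt_top_subset X k)).trans ?_
  rw [(monotone_extinct_inter_progenyBefore_ge X k).measure_iUnion]
  refine iSup_le fun m => ?_
  have h := measure_extinct_inter_progenyBefore_ge_mul_pow_le P hmeas hindep hident
    (ENNReal.one_le_inv.2 hb) hrc k m
  rwa [← ENNReal.le_div_iff_mul_le (Or.inl hrk) (Or.inr hc), div_eq_mul_inv, ← ENNReal.inv_pow,
    inv_inv] at h

theorem offspringPGF_le (hmeas : ∀ m i, Measurable (X m i)) (n : ℕ) {s : ℝ≥0∞} (hs : s ≤ 1) :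
    offspringPGF P X s ≤ P {ω | X 0 0 ω < n} + s ^ n := by
  have hle : (fun ω => s ^ X 0 0 ω) ≤ fun ω => {ω | X 0 0 ω < n}.indicator 1 ω + s ^ n := by
    intro ω
    by_cases hω : X 0 0 ω < n
    · simpa [hω] using le_add_right (pow_le_one₀ bot_le hs)
    · simpa [hω] using pow_le_pow_of_le_one bot_le hs (not_lt.1 hω)
  calc offspringPGF P X s
      ≤ ∫⁻ ω, {ω | X 0 0 ω < n}.indicator 1 ω + s ^ n ∂P := lintegral_mono hle
    _ = P {ω | X 0 0 ω < n} + s ^ n := by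
        rw [lintegral_add_right _ measurable_const,
          lintegral_indicator_one (measurableSet_lt (hmeas 0 0) measurable_const)]
        simp

theorem offspringPGF_le_two_rpow_mul_rpow (hmeas : ∀ m i, Measurable (X m i)) {n : ℕ}
    (hn : n ≠ 0) {q : ℝ} (hq : q = (P {ω | X 0 0 ω < n}).toReal) {s : ℝ≥0∞}
    (hs : s ≤ ENNReal.ofReal (q ^ (1 / (n : ℝ)))) :
    offspringPGF P X s
      ≤ ENNReal.ofReal (2 * q ^ (1 - 1 / (n : ℝ))) * ENNReal.ofReal (q ^ (1 / (n : ℝ))) := by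
  have hqP : P {ω | X 0 0 ω < n} = ENNReal.ofReal q := by
    rw [hq, ENNReal.ofReal_toReal (measure_ne_top P _)]
  have hq0 : 0 ≤ q := hq ▸ ENNReal.toReal_nonneg
  have hq1 : q ≤ 1 := hq ▸ ENNReal.toReal_le_of_le_ofReal zero_le_one (by simpa using prob_le_one)
  have hc1 : q ^ (1 / (n : ℝ)) ≤ 1 := Real.rpow_le_one hq0 hq1 (by positivity)
  have hcn : (q ^ (1 / (n : ℝ))) ^ n = q := by
    rw [← Real.rpow_natCast, ← Real.rpow_mul hq0, one_div_mul_cancel (by positivity),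
      Real.rpow_one]
  have hbc : 2 * q ^ (1 - 1 / (n : ℝ)) * q ^ (1 / (n : ℝ)) = q + q := by
    rw [mul_assoc, ← Real.rpow_add' hq0 (by norm_num), sub_add_cancel, Real.rpow_one, two_mul]
  calc offspringPGF P X s ≤ ENNReal.ofReal q + ENNReal.ofReal (q ^ (1 / (n : ℝ))) ^ n := by
        rw [← hqP]
        exact (offspringPGF_le P hmeas n (hs.trans (ENNReal.ofReal_le_one.2 hc1))).trans
          (by gcongr)
    _ = ENNReal.ofReal (2 * q ^ (1 - 1 / (n : ℝ))) * ENNReal.ofReal (q ^ (1 / (n : ℝ))) := by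
        rw [← ENNReal.ofReal_pow (by positivity), hcn, ← ENNReal.ofReal_mul (by positivity), hbc,
          ENNReal.ofReal_add hq0 hq0]

end Probability

theorem two_mul_rpow_one_sub_inv_le_one {q x : ℝ} (hq0 : 0 ≤ q) (hx : 1 < x)
    (hq : q ≤ 2 ^ (-x / (x - 1))) : 2 * q ^ (1 - 1 / x) ≤ 1 := by
  have hexp : (-x / (x - 1)) * (1 - 1 / x) = -1 := by
    field_simp [(by linarith : x - 1 ≠ 0)]
  have hhalf : q ^ (1 - 1 / x) ≤ 2⁻¹ :=
    calc q ^ (1 - 1 / x) ≤ ((2 : ℝ) ^ (-x / (x - 1))) ^ (1 - 1 / x) :=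
          Real.rpow_le_rpow hq0 hq (by rw [sub_nonneg, div_le_one (by linarith)]; linarith)
      _ = 2⁻¹ := by rw [← Real.rpow_mul zero_le_two, hexp, Real.rpow_neg_one]
  linarith

end GaltonWatson

theorem stmt8_general {Ω : Type*} [MeasurableSpace Ω] (P : Measure Ω) [IsProbabilityMeasure P]
    (X : ℕ → ℕ → Ω → ℕ) (hmeas : ∀ m i, Measurable (X m i))
    (hindep : iIndepFun (fun p : ℕ × ℕ => X p.1 p.2) P)
    (hident : ∀ m i, Measure.map (X m i) P = Measure.map (X 0 0) P)
    (n : ℕ) (hn : 2 ≤ n)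
    (q : ℝ) (hqdef : q = (P {ω | X 0 0 ω < n}).toReal)
    (hq : q ≤ 2 ^ (-(n : ℝ) / ((n : ℝ) - 1)))
    (πe : ℝ) (hπpos : 0 < πe)
    (k : ℕ) :
    (P ({ω | (k : ℝ≥0∞) ≤ gwProgeny X ω} ∩ {ω | gwProgeny X ω < ⊤})).toReal / πe
      ≤ (q ^ (1 / (n : ℝ)) / πe) * (2 * q ^ (1 - 1 / (n : ℝ))) ^ k := by
  have hq0 : 0 ≤ q := hqdef ▸ ENNReal.toReal_nonneg
  have hb1 : 2 * q ^ (1 - 1 / (n : ℝ)) ≤ 1 :=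
    GaltonWatson.two_mul_rpow_one_sub_inv_le_one hq0 (by exact_mod_cast hn) hq
  have hmain := GaltonWatson.measure_progeny_ge_inter_lt_top_le P hmeas hindep hident
    (ENNReal.ofReal_le_one.2 hb1) ENNReal.ofReal_ne_top
    (fun _ hs => GaltonWatson.offspringPGF_le_two_rpow_mul_rpow P hmeas (by omega) hqdef hs) k
  rw [div_mul_eq_mul_div]
  gcongr
  refine ENNReal.toReal_le_of_le_ofReal (by positivity) ?_
  rwa [ENNReal.ofReal_mul (by positivity), ENNReal.ofReal_pow (by positivity)]

theorem stmt8 {Ω : Type*} [MeasurableSpace Ω] (P : Measure Ω) [IsProbabilityMeasure P]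
    (X : ℕ → ℕ → Ω → ℕ) (hmeas : ∀ m i, Measurable (X m i))
    (hindep : iIndepFun (fun p : ℕ × ℕ => X p.1 p.2) P)
    (hident : ∀ m i, Measure.map (X m i) P = Measure.map (X 0 0) P)
    (n : ℕ) (hn : 2 ≤ n)
    (q : ℝ) (hqdef : q = (P {ω | X 0 0 ω < n}).toReal)
    (hq : q ≤ 2 ^ (-(n : ℝ) / ((n : ℝ) - 1)))
    (πe : ℝ) (hπe : πe = (P {ω | gwProgeny X ω < ⊤}).toReal) (hπpos : 0 < πe)
    (k : ℕ) (hk : 1 ≤ k) :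
    (P ({ω | (k : ℝ≥0∞) ≤ gwProgeny X ω} ∩ {ω | gwProgeny X ω < ⊤})).toReal / πe
      ≤ (q ^ (1 / (n : ℝ)) / πe) * (2 * q ^ (1 - 1 / (n : ℝ))) ^ k :=
  stmt8_general P X hmeas hindep hident n hn q hqdef hq πe hπpos k
end
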